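/- The supremal conditionally controllable sublanguage exists and equals the union of all conditionally controllable sublanguages: given generators G₁, G₂, G_k over E₁, E₂, E_k, uncontrollable alphabets E_{1,u}, E_{2,u}, E_{k,u}, and a family (K_i)_{i∈I} of sublanguages of K ⊆ L(G₁∥G₂∥G_k), each conditionally controllable for G₁, G₂, G_k, the union ∪_{i∈I} K_i is conditionally controllable for G₁, G₂, G_k. -/

import Mathlib

open scoped Classical

/-- Natural projection: erase letters not in `A`. -/
noncomputable def proj {Ev : Type*} (A : Set Ev) (w : List Ev) : List Ev :=
  w.filter (fun a => decide (a ∈ A))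

/-- Projection of a language. -/
noncomputable def projL {Ev : Type*} (A : Set Ev) (L : Set (List Ev)) : Set (List Ev) :=
  proj A '' L

/-- Words over an alphabet `A`, i.e., `A*`. -/
def star {Ev : Type*} (A : Set Ev) : Set (List Ev) := {w | ∀ a ∈ w, a ∈ A}

/-- Synchronous product of `L₁ ⊆ A*` and `L₂ ⊆ B*`. -/
noncomputable def sync {Ev : Type*} (A B : Set Ev) (L1 L2 : Set (List Ev)) :
    Set (List Ev) :=
  {w | w ∈ star (A ∪ B) ∧ proj A w ∈ L1 ∧ proj B w ∈ L2}

/-- Prefix closure of a language. -/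
def prefixCl {Ev : Type*} (L : Set (List Ev)) : Set (List Ev) := {w | ∃ v, w ++ v ∈ L}

/-- Controllability of `K` with respect to (prefix-closed) `L` and uncontrollable events `Eu`. -/
def controllable {Ev : Type*} (K L : Set (List Ev)) (Eu : Set Ev) : Prop :=
  ∀ s ∈ prefixCl K, ∀ u ∈ Eu, s ++ [u] ∈ L → s ++ [u] ∈ prefixCl K

/-- Supremal controllable sublanguage of `K` w.r.t. `N` and `U`. -/
noncomputable def supC {Ev : Type*} (K N : Set (List Ev)) (U : Set Ev) : Set (List Ev) :=
  ⋃₀ {M | M ⊆ K ∧ controllable M N U}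

/-- `proj A` is an `L`-observer. -/
def observer {Ev : Type*} (A : Set Ev) (L : Set (List Ev)) : Prop :=
  ∀ t ∈ projL A L, ∀ s ∈ prefixCl L, proj A s <+: t →
    ∃ u, s ++ u ∈ L ∧ proj A (s ++ u) = t

/-- `proj A` is locally control consistent (LCC) for `L` (w.r.t. uncontrollable events `Eu`). -/
def lcc {Ev : Type*} (A Eu : Set Ev) (L : Set (List Ev)) : Prop :=
  ∀ s ∈ L, ∀ σ ∈ A ∩ Eu, proj A s ++ [σ] ∈ projL A L →
    (∃ u, (∀ a ∈ u, a ∉ A) ∧ s ++ u ++ [σ] ∈ L) →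
    ∃ u, (∀ a ∈ u, a ∈ Eu ∧ a ∉ A) ∧ s ++ u ++ [σ] ∈ L

/-- Conditional controllability of `K` for plants `LG1, LG2, LGk` and uncontrollable
events `Eu`. -/
def condC {Ev : Type*} (E1 E2 Ek Eu : Set Ev) (LG1 LG2 LGk : Set (List Ev))
    (K : Set (List Ev)) : Prop :=
  controllable (projL Ek K) LGk (Ek ∩ Eu) ∧
  controllable (projL (E1 ∪ Ek) K)
    (sync E1 Ek LG1 (prefixCl (projL Ek K))) ((E1 ∪ Ek) ∩ Eu) ∧
  controllable (projL (E2 ∪ Ek) K)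
    (sync E2 Ek LG2 (prefixCl (projL Ek K))) ((E2 ∪ Ek) ∩ Eu)

section Languages

variable {Ev : Type*}

lemma proj_append (A : Set Ev) (s t : List Ev) :
    proj A (s ++ t) = proj A s ++ proj A t := by
  simp [proj]

lemma proj_proj {A B : Set Ev} (h : B ⊆ A) (w : List Ev) :
    proj B (proj A w) = proj B w := by
  unfold proj
  rw [List.filter_filter]
  congr 1
  funext a
  by_cases hb : a ∈ B
  · simp [hb, h hb]
  · simp [hb]

lemma proj_append_singleton_of_mem {A : Set Ev} {a : Ev} (ha : a ∈ A) (s : List Ev) :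
    proj A (s ++ [a]) = proj A s ++ [a] := by
  simp [proj, ha]

lemma proj_append_singleton_of_notMem {A : Set Ev} {a : Ev} (ha : a ∉ A) (s : List Ev) :
    proj A (s ++ [a]) = proj A s := by
  simp [proj, ha]

lemma prefixCl_mono {L L' : Set (List Ev)} (h : L ⊆ L') : prefixCl L ⊆ prefixCl L' :=
  fun _ ⟨v, hv⟩ => ⟨v, h hv⟩

lemma prefixCl_iUnion {ι : Type*} (L : ι → Set (List Ev)) :
    prefixCl (⋃ i, L i) = ⋃ i, prefixCl (L i) := by
  ext w
  simp only [prefixCl, Set.mem_iUnion, Set.mem_ofPred_eq]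
  exact exists_comm

lemma projL_iUnion (A : Set Ev) {ι : Type*} (L : ι → Set (List Ev)) :
    projL A (⋃ i, L i) = ⋃ i, projL A (L i) :=
  Set.image_iUnion

lemma projL_mono (A : Set Ev) {L L' : Set (List Ev)} (h : L ⊆ L') : projL A L ⊆ projL A L' :=
  Set.image_mono h

lemma proj_mem_prefixCl_projL {A B : Set Ev} (h : B ⊆ A) {L : Set (List Ev)} {s : List Ev}
    (hs : s ∈ prefixCl (projL A L)) : proj B s ∈ prefixCl (projL B L) := by
  obtain ⟨v, w, hw, hwv⟩ := hs
  exact ⟨proj B v, w, hw, by rw [← proj_append, ← hwv, proj_proj h]⟩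

lemma projL_subset_of_subset_sync {E1 E2 Ek : Set Ev} {LG1 LG2 LGk K : Set (List Ev)}
    (hK : K ⊆ sync E1 (E2 ∪ Ek) LG1 (sync E2 Ek LG2 LGk)) : projL Ek K ⊆ LGk := by
  rintro _ ⟨w, hw, rfl⟩
  rw [← proj_proj Set.subset_union_right]
  exact (hK hw).2.2.2.2

lemma controllable_iUnion {ι : Type*} {K : ι → Set (List Ev)} {L : Set (List Ev)}
    {U : Set Ev} (h : ∀ i, controllable (K i) L U) : controllable (⋃ i, K i) L U := by
  intro s hs u hu hsu
  rw [prefixCl_iUnion, Set.mem_iUnion] at hs ⊢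
  obtain ⟨i, hi⟩ := hs
  exact ⟨i, h i s hi u hu hsu⟩

/-- An uncontrollable step that leaves `\overline{P_k(K)}` but stays in `LGk` is ruled out by
the controllability of `P_k(K)` w.r.t. `LGk`. -/
lemma controllable_sync_of_subset {E Ek Eu : Set Ev} {LG LGk Lk K : Set (List Ev)}
    (hk : controllable (projL Ek K) LGk (Ek ∩ Eu))
    (hEk : controllable (projL (E ∪ Ek) K)
      (sync E Ek LG (prefixCl (projL Ek K))) ((E ∪ Ek) ∩ Eu))
    (hLk : Lk ⊆ LGk) :
    controllable (projL (E ∪ Ek) K) (sync E Ek LG Lk) ((E ∪ Ek) ∩ Eu) := by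
  intro s hs u hu ⟨hstar, hLG, hsuk⟩
  refine hEk s hs u hu ⟨hstar, hLG, ?_⟩
  have hsk : proj Ek s ∈ prefixCl (projL Ek K) :=
    proj_mem_prefixCl_projL Set.subset_union_right hs
  by_cases huk : u ∈ Ek
  · rw [proj_append_singleton_of_mem huk] at hsuk ⊢
    exact hk _ hsk u ⟨huk, hu.2⟩ (hLk hsuk)
  · rwa [proj_append_singleton_of_notMem huk]

end Languages

theorem stmt9_general {Ev : Type*} (E1 E2 Ek Eu : Set Ev) (LG1 LG2 LGk K : Set (List Ev))
    (hLGkc : prefixCl LGk = LGk)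
    (hK : K ⊆ sync E1 (E2 ∪ Ek) LG1 (sync E2 Ek LG2 LGk))
    {ι : Type*} (Ki : ι → Set (List Ev))
    (hsub : ∀ i, Ki i ⊆ K)
    (hcc : ∀ i, condC E1 E2 Ek Eu LG1 LG2 LGk (Ki i)) :
    condC E1 E2 Ek Eu LG1 LG2 LGk (⋃ i, Ki i) := by
  have hLk : prefixCl (projL Ek (⋃ i, Ki i)) ⊆ LGk := hLGkc ▸ prefixCl_mono
    ((projL_mono Ek (Set.iUnion_subset hsub)).trans (projL_subset_of_subset_sync hK))
  refine ⟨?_, ?_, ?_⟩ <;> rw [projL_iUnion] <;> refine controllable_iUnion fun i => ?_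
  · exact (hcc i).1
  · exact controllable_sync_of_subset (hcc i).1 (hcc i).2.1 hLk
  · exact controllable_sync_of_subset (hcc i).1 (hcc i).2.2 hLk

/-- the union of conditionally controllable sublanguages is conditionally
controllable; hence the supremal conditionally controllable sublanguage exists. -/
theorem stmt9 {Ev : Type*} (E1 E2 Ek Eu : Set Ev) (LG1 LG2 LGk K : Set (List Ev))
    (hLG1 : LG1 ⊆ star E1) (hLG2 : LG2 ⊆ star E2) (hLGk : LGk ⊆ star Ek)
    (hLG1c : prefixCl LG1 = LG1) (hLG2c : prefixCl LG2 = LG2) (hLGkc : prefixCl LGk = LGk)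
    (hK : K ⊆ sync E1 (E2 ∪ Ek) LG1 (sync E2 Ek LG2 LGk))
    {ι : Type*} (Ki : ι → Set (List Ev))
    (hsub : ∀ i, Ki i ⊆ K)
    (hcc : ∀ i, condC E1 E2 Ek Eu LG1 LG2 LGk (Ki i)) :
    condC E1 E2 Ek Eu LG1 LG2 LGk (⋃ i, Ki i) :=
  stmt9_general E1 E2 Ek Eu LG1 LG2 LGk K hLGkc hK Ki hsub hcc
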